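/- There is an absolute constant C such that for every s ∈ (0,1], the function R[L_s](y) := −(1/π)∫_ℝ L_s'(y−α)·[ (⨍_α L_s(y))² − L_s(y)² ] / [ 1 + (⨍_α L_s(y))² ] dα/α satisfies ( ∫_ℝ |R[L_s](y)|^{4/3} dy )^{3/4} + ( ∫_ℝ |R[L_s](y)|² dy )^{1/2} ≤ C·s³. -/

import Mathlib

open MeasureTheory Real Set Filter

/-- Sliding average `⨍_α f(y) = (1/α) ∫_{y-α}^{y} f(z) dz`. -/
noncomputable def fint (α : ℝ) (f : ℝ → ℝ) (y : ℝ) : ℝ :=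
  (1 / α) * ∫ z in (y - α)..y, f z

/-- Finite difference slope `Δ_α f(y) = (f(y) - f(y-α))/α`. -/
noncomputable def slopeOp (α : ℝ) (f : ℝ → ℝ) (y : ℝ) : ℝ :=
  (f y - f (y - α)) / α

/-- The profile `L_s(y) = (2s/π) arctan((1+s²/3) y)`. -/
noncomputable def Ls (s y : ℝ) : ℝ := (2 * s / Real.pi) * Real.arctan ((1 + s ^ 2 / 3) * y)

/-- `δ_α[f,g](y) = ⨍_α f ⨍_α g - ⨍_{-α} f ⨍_{-α} g`. -/
noncomputable def deltaOp (α : ℝ) (f g : ℝ → ℝ) (y : ℝ) : ℝ :=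
  fint α f y * fint α g y - fint (-α) f y * fint (-α) g y

/-- `J_α[f,g](y) = ⨍_α f ⨍_α g - 2 f g + ⨍_{-α} f ⨍_{-α} g`. -/
noncomputable def Jop (α : ℝ) (f g : ℝ → ℝ) (y : ℝ) : ℝ :=
  fint α f y * fint α g y - 2 * f y * g y + fint (-α) f y * fint (-α) g y

/-- The `H¹` norm `(∫ g² + ∫ (g')²)^{1/2}`. -/
noncomputable def H1norm (g : ℝ → ℝ) : ℝ :=
  Real.sqrt ((∫ y : ℝ, g y ^ 2) + ∫ y : ℝ, deriv g y ^ 2)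

/-- The semilinear term `R[L_s]`. -/
noncomputable def RLs (s y : ℝ) : ℝ :=
  -(1 / Real.pi) * ∫ α : ℝ,
    deriv (Ls s) (y - α) *
      (((fint α (Ls s) y) ^ 2 - (Ls s y) ^ 2) / (1 + (fint α (Ls s) y) ^ 2)) / α

/-!
Since `|⨍_α L_s| ≤ s` and `|L_s| ≤ s`, the quotient
`((⨍_α L_s)² − L_s²)/(1 + (⨍_α L_s)²)` is at most `2s |⨍_α L_s(y) − L_s(y)|`, hence at most
`2sM|α|` when `L_s' ≤ M` on `[y − r, y + r]` and `|α| ≤ r`, and at most `4s²` always. So the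
`α`-integrand of `R[L_s](y)` is bounded by `(2sM + 4s²/r) L_s'(y − α)`, and `∫ L_s' ≤ πs`.
Choosing `r = 1` near the origin and `r = |y|/2` (where `L_s' ≤ 4s/y²`) far from it gives
`|R[L_s](y)| ≤ 24 s³/(1 + |y|)`, a function of size `s³` in `L^{4/3} ∩ L²`.
-/
section Lp

open Module

variable {E : Type*} [NormedAddCommGroup E] [NormedSpace ℝ E] [FiniteDimensional ℝ E]
  [MeasurableSpace E] [BorelSpace E] {μ : Measure E} [μ.IsAddHaarMeasure]

theorem rpow_integral_abs_rpow_le_of_abs_le_div_one_add_norm {f : E → ℝ} {B p : ℝ}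
    (hp : (finrank ℝ E : ℝ) < p) (hf : ∀ x, |f x| ≤ B / (1 + ‖x‖)) :
    (∫ x, |f x| ^ p ∂μ) ^ p⁻¹ ≤ B * (∫ x, (1 + ‖x‖) ^ (-p) ∂μ) ^ p⁻¹ := by
  have hp0 : 0 < p := (Nat.cast_nonneg _).trans_lt hp
  have hB : 0 ≤ B := by simpa using (abs_nonneg _).trans (hf 0)
  have hpt : ∀ x, |f x| ^ p ≤ B ^ p * (1 + ‖x‖) ^ (-p) := fun x => by
    rw [rpow_neg (by positivity), ← div_eq_mul_inv, ← div_rpow hB (by positivity)]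
    exact rpow_le_rpow (abs_nonneg _) (hf x) hp0.le
  have hint : ∫ x, |f x| ^ p ∂μ ≤ B ^ p * ∫ x, (1 + ‖x‖) ^ (-p) ∂μ := by
    rw [← integral_const_mul]
    exact integral_mono_of_nonneg (ae_of_all _ fun x => by positivity)
      ((integrable_one_add_norm hp).const_mul _) (ae_of_all _ hpt)
  have hK : 0 ≤ ∫ x, (1 + ‖x‖) ^ (-p) ∂μ := integral_nonneg fun x => by positivity
  calc (∫ x, |f x| ^ p ∂μ) ^ p⁻¹ ≤ (B ^ p * ∫ x, (1 + ‖x‖) ^ (-p) ∂μ) ^ p⁻¹ :=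
        rpow_le_rpow (integral_nonneg fun x => by positivity) hint (inv_nonneg.2 hp0.le)
    _ = B * (∫ x, (1 + ‖x‖) ^ (-p) ∂μ) ^ p⁻¹ := by
        rw [mul_rpow (by positivity) hK, ← rpow_mul hB, mul_inv_cancel₀ hp0.ne', rpow_one]

end Lp

section SlidingAverage

variable {f : ℝ → ℝ} {α y : ℝ}

theorem abs_fint_le {K : ℝ} (hK : 0 ≤ K) (hf : ∀ z ∈ uIoc (y - α) y, |f z| ≤ K) :
    |fint α f y| ≤ K := by
  rcases eq_or_ne α 0 with rfl | hα
  · simpa [fint] using hK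
  have hI := intervalIntegral.norm_integral_le_of_norm_le_const (f := f) (C := K) hf
  rw [sub_sub_cancel, Real.norm_eq_abs] at hI
  calc |fint α f y| = |α|⁻¹ * |∫ z in (y - α)..y, f z| := by
        rw [fint, abs_mul, abs_div, abs_one, one_div]
    _ ≤ |α|⁻¹ * (K * |α|) := by gcongr
    _ = K := by field_simp

theorem fint_sub_const (hα : α ≠ 0) (hf : IntervalIntegrable f volume (y - α) y) (c : ℝ) :
    fint α (fun z => f z - c) y = fint α f y - c := by
  rw [fint, fint, intervalIntegral.integral_sub hf intervalIntegrable_const,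
    intervalIntegral.integral_const, sub_sub_cancel, smul_eq_mul]
  field_simp

end SlidingAverage

theorem abs_sq_sub_sq_div_one_add_sq_le {a b s : ℝ} (ha : |a| ≤ s) (hb : |b| ≤ s) :
    |(a ^ 2 - b ^ 2) / (1 + a ^ 2)| ≤ 2 * s * |a - b| := by
  have hden : 1 ≤ 1 + a ^ 2 := le_add_of_nonneg_right (sq_nonneg a)
  calc |(a ^ 2 - b ^ 2) / (1 + a ^ 2)| ≤ |a ^ 2 - b ^ 2| := by
        rw [abs_div, abs_of_pos (by linarith : (0:ℝ) < 1 + a ^ 2)]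
        exact div_le_self (abs_nonneg _) hden
    _ = |a + b| * |a - b| := by rw [← abs_mul]; ring_nf
    _ ≤ 2 * s * |a - b| := by
        gcongr
        linarith [abs_add_le a b]

section Profile

variable {s : ℝ}

theorem hasDerivAt_Ls (s y : ℝ) :
    HasDerivAt (Ls s) (2 * s / π * (1 + s ^ 2 / 3) / (1 + ((1 + s ^ 2 / 3) * y) ^ 2)) y :=
  (((hasDerivAt_id' y).const_mul (1 + s ^ 2 / 3)).arctan.const_mul (2 * s / π)).congr_deriv
    (by ring)

theorem deriv_Ls (s y : ℝ) :
    deriv (Ls s) y = 2 * s / π * (1 + s ^ 2 / 3) / (1 + ((1 + s ^ 2 / 3) * y) ^ 2) :=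
  (hasDerivAt_Ls s y).deriv

theorem continuous_Ls (s : ℝ) : Continuous (Ls s) :=
  continuous_iff_continuousAt.2 fun y => (hasDerivAt_Ls s y).continuousAt

theorem deriv_Ls_nonneg (hs : 0 ≤ s) (t : ℝ) : 0 ≤ deriv (Ls s) t := by
  rw [deriv_Ls]; positivity

theorem deriv_Ls_le (hs : 0 ≤ s) (hs1 : s ≤ 1) (t : ℝ) : deriv (Ls s) t ≤ s / (1 + t ^ 2) := by
  have hpi : 3 < π := pi_gt_three
  have hc : 2 * s / π * (1 + s ^ 2 / 3) ≤ s := by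
    rw [div_mul_eq_mul_div, div_le_iff₀ (by positivity)]
    nlinarith
  rw [deriv_Ls]
  exact div_le_div₀ hs hc (by positivity)
    (by nlinarith [sq_nonneg (s * t), sq_nonneg (s ^ 2 * t)])

theorem abs_Ls_le (hs : 0 ≤ s) (t : ℝ) : |Ls s t| ≤ s := by
  have h : |arctan ((1 + s ^ 2 / 3) * t)| ≤ π / 2 :=
    abs_le.2 ⟨(neg_pi_div_two_lt_arctan _).le, (arctan_lt_pi_div_two _).le⟩
  rw [Ls, abs_mul, abs_of_nonneg (by positivity)]
  calc 2 * s / π * |arctan ((1 + s ^ 2 / 3) * t)| ≤ 2 * s / π * (π / 2) := by gcongr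
    _ = s := by field_simp

theorem integrable_deriv_Ls (s : ℝ) : Integrable (deriv (Ls s)) := by
  have h := ((integrable_comp_mul_left_iff (fun u : ℝ => (1 + u ^ 2)⁻¹)
    (by positivity : (1 + s ^ 2 / 3) ≠ 0)).2 integrable_inv_one_add_sq).const_mul
    (2 * s / π * (1 + s ^ 2 / 3))
  convert h using 2 with t
  rw [deriv_Ls, div_eq_mul_inv]

theorem integral_deriv_Ls_le (hs : 0 ≤ s) (hs1 : s ≤ 1) : ∫ t, deriv (Ls s) t ≤ s * π :=
  calc ∫ t, deriv (Ls s) t ≤ ∫ t : ℝ, s * (1 + t ^ 2)⁻¹ :=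
        integral_mono (integrable_deriv_Ls s) (integrable_inv_one_add_sq.const_mul s)
          fun t => (deriv_Ls_le hs hs1 t).trans_eq (div_eq_mul_inv _ _)
    _ = s * π := by rw [integral_const_mul, integral_univ_inv_one_add_sq]

end Profile

section Remainder

variable {s y r M : ℝ}

theorem abs_fint_Ls_sub_le {α : ℝ} (hs : 0 ≤ s) (hα : α ≠ 0) (hαr : |α| ≤ r)
    (hM : ∀ t ∈ Icc (y - r) (y + r), deriv (Ls s) t ≤ M) :
    |fint α (Ls s) y - Ls s y| ≤ M * |α| := by
  have hsub : uIcc (y - α) y ⊆ Icc (y - r) (y + r) := by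
    refine uIcc_subset_Icc ⟨?_, ?_⟩ ⟨?_, ?_⟩ <;>
      linarith [neg_abs_le α, le_abs_self α, abs_nonneg α]
  have hM0 : 0 ≤ M := (deriv_Ls_nonneg hs y).trans (hM y (hsub right_mem_uIcc))
  have hlip : ∀ z ∈ uIcc (y - α) y, |Ls s z - Ls s y| ≤ M * |α| := fun z hz => by
    have h := (convex_Icc (y - r) (y + r)).norm_image_sub_le_of_norm_deriv_le
      (fun x _ => (hasDerivAt_Ls s x).differentiableAt)
      (fun x hx => (norm_of_nonneg (deriv_Ls_nonneg hs x)).trans_le (hM x hx))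
      (hsub right_mem_uIcc) (hsub hz)
    have hz' := abs_sub_right_of_mem_uIcc hz
    rw [sub_sub_cancel] at hz'
    rw [Real.norm_eq_abs, Real.norm_eq_abs, abs_sub_comm z] at h
    exact h.trans (by gcongr)
  rw [← fint_sub_const hα ((continuous_Ls s).intervalIntegrable _ _)]
  exact abs_fint_le (by positivity) fun z hz => hlip z (uIoc_subset_uIcc hz)

theorem abs_sq_fint_Ls_sub_sq_div_le (hs : 0 ≤ s) (hr : 0 < r)
    (hM : ∀ t ∈ Icc (y - r) (y + r), deriv (Ls s) t ≤ M) (α : ℝ) :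
    |(fint α (Ls s) y ^ 2 - Ls s y ^ 2) / (1 + fint α (Ls s) y ^ 2) / α|
      ≤ 2 * s * M + 4 * s ^ 2 / r := by
  have hM0 : 0 ≤ M := (deriv_Ls_nonneg hs y).trans (hM y ⟨by linarith, by linarith⟩)
  rcases eq_or_ne α 0 with rfl | hα
  · simp only [div_zero, abs_zero]; positivity
  have hF : |fint α (Ls s) y| ≤ s := abs_fint_le hs fun z _ => abs_Ls_le hs z
  have hq := abs_sq_sub_sq_div_one_add_sq_le hF (abs_Ls_le hs y)
  rw [abs_div, div_le_iff₀ (abs_pos.2 hα)]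
  rcases le_or_gt |α| r with hαr | hαr
  · calc _ ≤ 2 * s * |fint α (Ls s) y - Ls s y| := hq
      _ ≤ 2 * s * (M * |α|) := by gcongr; exact abs_fint_Ls_sub_le hs hα hαr hM
      _ ≤ (2 * s * M + 4 * s ^ 2 / r) * |α| := by
          have : 0 ≤ 4 * s ^ 2 / r * |α| := by positivity
          linarith
  · have hd : |fint α (Ls s) y - Ls s y| ≤ 2 * s := by
      linarith [abs_sub (fint α (Ls s) y) (Ls s y), abs_Ls_le hs y]
    calc _ ≤ 2 * s * |fint α (Ls s) y - Ls s y| := hq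
      _ ≤ 2 * s * (2 * s) := by gcongr
      _ = 4 * s ^ 2 / r * r := by field_simp; ring
      _ ≤ (2 * s * M + 4 * s ^ 2 / r) * |α| := by gcongr; linarith [mul_nonneg hs hM0]

theorem abs_RLs_le (hs : 0 ≤ s) (hs1 : s ≤ 1) (hr : 0 < r)
    (hM : ∀ t ∈ Icc (y - r) (y + r), deriv (Ls s) t ≤ M) :
    |RLs s y| ≤ s * (2 * s * M + 4 * s ^ 2 / r) := by
  set c := 2 * s * M + 4 * s ^ 2 / r
  have hc : 0 ≤ c := (abs_nonneg _).trans (abs_sq_fint_Ls_sub_sq_div_le hs hr hM 0)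
  have hbound : ∀ α, ‖deriv (Ls s) (y - α) *
      ((fint α (Ls s) y ^ 2 - Ls s y ^ 2) / (1 + fint α (Ls s) y ^ 2)) / α‖
        ≤ c * deriv (Ls s) (y - α) := fun α => by
    rw [Real.norm_eq_abs, mul_div_assoc, abs_mul, abs_of_nonneg (deriv_Ls_nonneg hs _),
      mul_comm]
    exact mul_le_mul_of_nonneg_right (abs_sq_fint_Ls_sub_sq_div_le hs hr hM α)
      (deriv_Ls_nonneg hs _)
  have hint : Integrable fun α => deriv (Ls s) (y - α) := (integrable_deriv_Ls s).comp_sub_left y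
  calc |RLs s y| = π⁻¹ * ‖∫ α : ℝ, deriv (Ls s) (y - α) *
        ((fint α (Ls s) y ^ 2 - Ls s y ^ 2) / (1 + fint α (Ls s) y ^ 2)) / α‖ := by
        rw [RLs, abs_mul, abs_neg, one_div, abs_inv, abs_of_pos pi_pos, Real.norm_eq_abs]
    _ ≤ π⁻¹ * ∫ α, c * deriv (Ls s) (y - α) := by
        gcongr
        exact norm_integral_le_of_norm_le (hint.const_mul c) (ae_of_all _ hbound)
    _ = π⁻¹ * (c * ∫ t, deriv (Ls s) t) := by rw [integral_const_mul, integral_sub_left_eq_self]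
    _ ≤ π⁻¹ * (c * (s * π)) := by gcongr; exact integral_deriv_Ls_le hs hs1
    _ = s * c := by field_simp

theorem abs_RLs_le_div_one_add_abs (hs : 0 ≤ s) (hs1 : s ≤ 1) (y : ℝ) :
    |RLs s y| ≤ 24 * s ^ 3 / (1 + |y|) := by
  rcases le_or_gt |y| 2 with hy | hy
  · have hM : ∀ t ∈ Icc (y - 1) (y + 1), deriv (Ls s) t ≤ s := fun t _ =>
      (deriv_Ls_le hs hs1 t).trans (div_le_self hs (by nlinarith [sq_nonneg t]))
    calc |RLs s y| ≤ s * (2 * s * s + 4 * s ^ 2 / 1) := abs_RLs_le hs hs1 one_pos hM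
      _ ≤ 24 * s ^ 3 / (1 + |y|) := by
          rw [le_div_iff₀ (by positivity)]; nlinarith [pow_nonneg hs 3, abs_nonneg y]
  · have hM : ∀ t ∈ Icc (y - |y| / 2) (y + |y| / 2), deriv (Ls s) t ≤ 4 * s / |y| ^ 2 := by
      intro t ht
      have hyt : |y| ≤ 2 * |t| := by
        have hty : |y - t| ≤ |y| / 2 := abs_le.2 ⟨by linarith [ht.2], by linarith [ht.1]⟩
        linarith [abs_sub_abs_le_abs_sub y t]
      refine (deriv_Ls_le hs hs1 t).trans ?_
      rw [div_le_div_iff₀ (by positivity) (by positivity)]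
      nlinarith [mul_le_mul_of_nonneg_left (pow_le_pow_left₀ (abs_nonneg y) hyt 2) hs, sq_abs t]
    calc |RLs s y| ≤ s * (2 * s * (4 * s / |y| ^ 2) + 4 * s ^ 2 / (|y| / 2)) :=
          abs_RLs_le hs hs1 (by positivity) hM
      _ = 8 * s ^ 3 * (1 + |y|) / |y| ^ 2 := by field_simp; ring
      _ ≤ 24 * s ^ 3 / (1 + |y|) := by
          rw [div_le_div_iff₀ (by positivity) (by positivity)]
          have hy' : 0 ≤ 2 * |y| ^ 2 - 2 * |y| - 1 := by nlinarith
          nlinarith [mul_nonneg (pow_nonneg hs 3) hy']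

end Remainder

/-- `R[L_s]` is of size `s³` in `L^{4/3} ∩ L²`. -/
theorem RLs_bound :
    ∃ C : ℝ, 0 < C ∧ ∀ s : ℝ, 0 < s → s ≤ 1 →
      (∫ y : ℝ, |RLs s y| ^ ((4:ℝ)/3)) ^ ((3:ℝ)/4)
        + (∫ y : ℝ, |RLs s y| ^ 2) ^ ((1:ℝ)/2) ≤ C * s ^ 3 := by
  set K : ℝ → ℝ := fun p => (∫ y : ℝ, (1 + ‖y‖) ^ (-p)) ^ p⁻¹
  have hK : ∀ p, 0 ≤ K p := fun p => rpow_nonneg (integral_nonneg fun y => by positivity) _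
  refine ⟨24 * (K (4 / 3) + K 2) + 1, by linarith [hK (4 / 3), hK 2], fun s hs hs1 => ?_⟩
  have hdecay : ∀ y : ℝ, |RLs s y| ≤ 24 * s ^ 3 / (1 + ‖y‖) := fun y => by
    rw [Real.norm_eq_abs]; exact abs_RLs_le_div_one_add_abs hs.le hs1 y
  have h43 := rpow_integral_abs_rpow_le_of_abs_le_div_one_add_norm (μ := volume) (p := 4 / 3)
    (by norm_num) hdecay
  have h2 := rpow_integral_abs_rpow_le_of_abs_le_div_one_add_norm (μ := volume) (p := 2)
    (by norm_num) hdecay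
  change _ ≤ 24 * s ^ 3 * K (4 / 3) at h43
  change _ ≤ 24 * s ^ 3 * K 2 at h2
  rw [show ((4:ℝ) / 3)⁻¹ = 3 / 4 by norm_num] at h43
  rw [← one_div] at h2
  simp only [rpow_two] at h2
  nlinarith [pow_pos hs 3, hK (4 / 3), hK 2]
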